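/- Let N be a project network and let X be a k-crashing plan of N for some k ≥ 1. Then X contains a cut of the critical graph N*, i.e., there is a cut of N* all of whose edges e satisfy x_e ≥ 1. -/

import Mathlib

noncomputable section
open scoped Classical
open Finset

/-- A project network: a finite DAG (witnessed by a rank function) with a single
source `s` and a single sink `t`; each edge `e` carries a minimum length `a e`,
a normal length `b e`, and a nonnegative cost slope `c e`. -/
structure Project where
  V : Type
  E : Type
  [instFV : Fintype V]
  [instDV : DecidableEq V]
  [instFE : Fintype E]
  [instDE : DecidableEq E]
  src : E → V
  dst : E → V
  s : V
  t : V
  a : E → ℤ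
  b : E → ℤ
  c : E → ℝ
  length_lb : ∀ e, a e ≤ b e
  cost_nonneg : ∀ e, 0 ≤ c e
  rank : V → ℕ
  acyclic : ∀ e, rank (src e) < rank (dst e)
  s_no_in : ∀ e, dst e ≠ s
  t_no_out : ∀ e, src e ≠ t
  source_unique : ∀ v, v ≠ s → ∃ e, dst e = v
  sink_unique : ∀ v, v ≠ t → ∃ e, src e = v

attribute [instance] Project.instFV Project.instDV Project.instFE Project.instDE

namespace Project

/-- A network state: a subset of the edges together with current edge lengths. -/
structure State (P : Project) where
  edges : Finset P.E
  len : P.E → ℤ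

variable (P : Project)

/-- `es` is a directed path from the source `s` to the sink `t` using edges of `H`. -/
def IsPath (H : State P) (es : List P.E) : Prop :=
  es ≠ [] ∧ (∀ e ∈ es, e ∈ H.edges) ∧
  List.Chain' (fun e f => P.dst e = P.src f) es ∧
  (∀ e ∈ es.head?, P.src e = P.s) ∧ (∀ e ∈ es.getLast?, P.dst e = P.t)

/-- The length of a path in state `H`. -/
def pathLen (H : State P) (es : List P.E) : ℤ := (es.map H.len).sum

/-- The duration of `H`: the maximum total length of a directed `s`-`t` path. -/
def duration (H : State P) : ℤ :=
  sSup {L : ℤ | ∃ es, IsPath P H es ∧ pathLen P H es = L}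

/-- The critical graph `H*`: the edges of `H` lying on some maximum-length path. -/
def critical (H : State P) : State P :=
  ⟨H.edges.filter (fun e => ∃ es, IsPath P H es ∧ pathLen P H es = duration P H ∧ e ∈ es),
   H.len⟩

/-- An accelerate plan is feasible if each edge is shortened by at most `b e - a e`. -/
def Feasible (X : P.E → ℕ) : Prop := ∀ e, (X e : ℤ) ≤ P.b e - P.a e

/-- The original network `N` (all edges, with their normal lengths). -/
def base : State P := ⟨Finset.univ, P.b⟩

/-- The accelerated network `N(X)`, whose edge lengths are `b e - X e`. -/
def applyPlan (X : P.E → ℕ) : State P := ⟨Finset.univ, fun e => P.b e - X e⟩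

/-- The cost of a plan: `∑ e, c e * x e`. -/
def cost (X : P.E → ℕ) : ℝ := ∑ e, P.c e * (X e : ℝ)

/-- The cost of a set of edges: the sum of their cost slopes. -/
def costSet (C : Finset P.E) : ℝ := ∑ e ∈ C, P.c e

/-- `X` is a `k`-crashing plan of `N`: it is feasible and shortens the duration by `k`. -/
def Crashing (k : ℤ) (X : P.E → ℕ) : Prop :=
  Feasible P X ∧ duration P (applyPlan P X) ≤ duration P (base P) - k

/-- The plan shortening every edge maximally. -/
def fullPlan : P.E → ℕ := fun e => (P.b e - P.a e).toNat

/-- `k_max = d(N) - d(N(X_full))`. -/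
def kmax : ℤ := duration P (base P) - duration P (applyPlan P (fullPlan P))

/-- `C` is the cut of `H` determined by the vertex partition `(S, Sᶜ)` with `s ∈ S`, `t ∉ S`. -/
def IsCutWith (H : State P) (S : Finset P.V) (C : Finset P.E) : Prop :=
  P.s ∈ S ∧ P.t ∉ S ∧ C = H.edges.filter (fun e => P.src e ∈ S ∧ P.dst e ∉ S)

/-- `C` is a cut of `H`. -/
def IsCut (H : State P) (C : Finset P.E) : Prop := ∃ S, IsCutWith P H S C

/-- The plan `X` contains a cut of `H` (some cut lies inside the support of `X`). -/
def PlanContainsCut (H : State P) (X : P.E → ℕ) : Prop :=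
  ∃ C, IsCut P H C ∧ ∀ e ∈ C, 1 ≤ X e

/-- The edge set `D` contains a cut of `H`. -/
def ContainsCut (H : State P) (D : Finset P.E) : Prop :=
  ∃ C, IsCut P H C ∧ C ⊆ D

/-- `C = mincut(H, X)`: a minimum-cost cut of `H` among all cuts contained in `X`. -/
def IsMinCutIn (H : State P) (X : P.E → ℕ) (C : Finset P.E) : Prop :=
  IsCut P H C ∧ (∀ e ∈ C, 1 ≤ X e) ∧
  ∀ C', IsCut P H C' → (∀ e ∈ C', 1 ≤ X e) → costSet P C ≤ costSet P C'

/-- `H(C)`: the state `H` with every edge of `C` shortened by `1`. -/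
def shorten (H : State P) (C : Finset P.E) : State P :=
  ⟨H.edges, fun e => H.len e - if e ∈ C then 1 else 0⟩

/-- The decomposition `N_i, X_i, C_i` associated to a `k`-crashing plan `X`:
`N_1 = N`, `X_1 = X`, `C_i = mincut(N_i*, X_i)`, and for `1 < i ≤ k`,
`N_i = N_{i-1}*(C_{i-1})` and `X_i = X_{i-1} ∖ C_{i-1}`. -/
def Decomp (X : P.E → ℕ) (k : ℕ) (Ns : ℕ → State P) (Xs : ℕ → P.E → ℕ)
    (Cs : ℕ → Finset P.E) : Prop :=
  Ns 1 = base P ∧ Xs 1 = X ∧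
  (∀ i, 1 ≤ i → i ≤ k → IsMinCutIn P (critical P (Ns i)) (Xs i) (Cs i)) ∧
  ∀ i, 1 < i → i ≤ k →
    Ns i = shorten P (critical P (Ns (i - 1))) (Cs (i - 1)) ∧
    Xs i = fun e => Xs (i - 1) e - if e ∈ Cs (i - 1) then 1 else 0

/-- The edges of `H` within the vertex set `S`. -/
def withinEdges (H : State P) (S : Finset P.V) : Finset P.E :=
  H.edges.filter (fun e => P.src e ∈ S ∧ P.dst e ∈ S)

/-- The edges of `H` within the complement of the vertex set `S`. -/
def outsideEdges (H : State P) (S : Finset P.V) : Finset P.E :=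
  H.edges.filter (fun e => P.src e ∉ S ∧ P.dst e ∉ S)

/-- The edges of `H` going from the complement of `S` back into `S`. -/
def reverseCut (H : State P) (S : Finset P.V) : Finset P.E :=
  H.edges.filter (fun e => P.src e ∉ S ∧ P.dst e ∈ S)

/-- `Z` is an `m`-crashing plan of the accelerated network `N(Y)`. -/
def CrashesBy (Y Z : P.E → ℕ) (m : ℤ) : Prop :=
  Feasible P (fun e => Y e + Z e) ∧
  duration P (applyPlan P (fun e => Y e + Z e)) ≤ duration P (applyPlan P Y) - m

/-- `Z` is a minimum-cost `1`-crashing plan of the accelerated network `N(Y)`. -/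
def MinOneCrashOf (Y Z : P.E → ℕ) : Prop :=
  CrashesBy P Y Z 1 ∧ ∀ Z', CrashesBy P Y Z' 1 → cost P Z ≤ cost P Z'

end Project

/-!
Let `S` be the set of vertices reachable from `s` along edges of `N*` with `x_e = 0`.
If `t ∉ S`, the cut of `N*` determined by `S` lies in the support of `X`. Otherwise some
`s`–`t` walk runs along critical edges not shortened by `X`. A walk from `s` along critical
edges is a longest walk to its endpoint (splice any competitor onto the tail of a maximum path
through its last edge), so this walk has length `d(N)` in `N` and still in `N(X)`,
contradicting `d(N(X)) ≤ d(N) - k < d(N)`.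
-/

namespace Project

def IsWalk (P : Project) : P.V → P.V → List P.E → Prop
  | u, v, [] => u = v
  | u, v, e :: es => P.src e = u ∧ IsWalk P (P.dst e) v es

variable {P : Project}

@[simp]
lemma isWalk_nil {u v : P.V} : IsWalk P u v [] ↔ u = v := Iff.rfl

@[simp]
lemma isWalk_cons {u v : P.V} {e : P.E} {es : List P.E} :
    IsWalk P u v (e :: es) ↔ P.src e = u ∧ IsWalk P (P.dst e) v es := Iff.rfl

lemma isWalk_append {u w : P.V} {p q : List P.E} :
    IsWalk P u w (p ++ q) ↔ ∃ v, IsWalk P u v p ∧ IsWalk P v w q := by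
  induction p generalizing u with
  | nil => simp
  | cons e p ih => simp [ih, and_assoc]

lemma isWalk_concat {u v : P.V} {p : List P.E} {e : P.E} :
    IsWalk P u v (p ++ [e]) ↔ IsWalk P u (P.src e) p ∧ P.dst e = v := by
  simp [isWalk_append]

lemma IsWalk.rank_le {u v : P.V} {es : List P.E} (h : IsWalk P u v es) :
    P.rank u ≤ P.rank v := by
  induction es generalizing u with
  | nil => exact (congrArg P.rank h).le
  | cons e es ih =>
    obtain ⟨rfl, h⟩ := h
    exact (P.acyclic e).le.trans (ih h)

lemma IsWalk.eq_nil {u : P.V} {es : List P.E} (h : IsWalk P u u es) :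
    es = [] := by
  cases es with
  | nil => rfl
  | cons e es =>
    obtain ⟨rfl, h⟩ := h
    exact absurd h.rank_le (P.acyclic e).not_ge

lemma IsWalk.nodup {u v : P.V} {es : List P.E} (h : IsWalk P u v es) : es.Nodup := by
  induction es generalizing u with
  | nil => exact List.nodup_nil
  | cons e es ih =>
    obtain ⟨rfl, h⟩ := h
    refine List.nodup_cons.2 ⟨fun he => ?_, ih h⟩
    obtain ⟨p, q, rfl⟩ := List.append_of_mem he
    obtain ⟨v, hp, hv, -⟩ := isWalk_append.1 h
    exact (P.acyclic e).not_ge (hv ▸ hp.rank_le)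

lemma isWalk_cons_iff_isChain {u v : P.V} {e : P.E} {es : List P.E} :
    IsWalk P u v (e :: es) ↔ List.IsChain (fun e f => P.dst e = P.src f) (e :: es) ∧
      P.src e = u ∧ P.dst ((e :: es).getLast (List.cons_ne_nil e es)) = v := by
  induction es generalizing e u with
  | nil => simp
  | cons f es ih =>
    simp only [isWalk_cons, ih, List.isChain_cons_cons, List.getLast_cons (List.cons_ne_nil f es)]
    tauto

lemma isPath_iff {H : State P} {es : List P.E} :
    IsPath P H es ↔ es ≠ [] ∧ (∀ e ∈ es, e ∈ H.edges) ∧ IsWalk P P.s P.t es := by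
  cases es with
  | nil => simp [IsPath]
  | cons e es =>
    simp only [IsPath, isWalk_cons_iff_isChain, List.head?_cons,
      List.getLast?_eq_some_getLast (List.cons_ne_nil e es), Option.mem_def, Option.some.injEq,
      forall_eq']
    tauto

lemma IsWalk.pathLen_le_sum {u v : P.V} {es : List P.E} (h : IsWalk P u v es) (H : State P) :
    pathLen P H es ≤ ∑ e, max (H.len e) 0 := by
  rw [pathLen, ← List.sum_toFinset _ h.nodup]
  calc ∑ e ∈ es.toFinset, H.len e ≤ ∑ e ∈ es.toFinset, max (H.len e) 0 :=
        sum_le_sum fun e _ => le_max_left _ _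
    _ ≤ ∑ e, max (H.len e) 0 :=
        sum_le_sum_of_subset_of_nonneg (subset_univ _) fun e _ _ => le_max_right _ _

lemma pathLen_le_duration {H : State P} {es : List P.E} (h : IsPath P H es) :
    pathLen P H es ≤ duration P H := by
  refine le_csSup ?_ ⟨es, h, rfl⟩
  refine ⟨∑ e, max (H.len e) 0, ?_⟩
  rintro L ⟨es, hes, rfl⟩
  exact (isPath_iff.1 hes).2.2.pathLen_le_sum H

lemma duration_eq_zero_of_source_eq_sink (hst : P.s = P.t) (H : State P) :
    duration P H = 0 := by
  suffices h : {L : ℤ | ∃ es, IsPath P H es ∧ pathLen P H es = L} = ∅ by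
    rw [duration, h, Int.csSup_empty]
  refine Set.eq_empty_iff_forall_notMem.2 ?_
  rintro L ⟨es, hes, -⟩
  obtain ⟨hne, -, hw⟩ := isPath_iff.1 hes
  exact hne (hst ▸ hw).eq_nil

lemma IsWalk.pathLen_le_of_critical {H : State P} {v : P.V} {q w : List P.E}
    (hq : IsWalk P P.s v q) (hqc : ∀ e ∈ q, e ∈ (critical P H).edges)
    (hw : IsWalk P P.s v w) (hwH : ∀ e ∈ w, e ∈ H.edges) :
    pathLen P H w ≤ pathLen P H q := by
  induction q using List.reverseRecOn generalizing v w with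
  | nil =>
    rw [isWalk_nil.1 hq] at hw
    simp [hw.eq_nil, pathLen]
  | append_singleton q e ih =>
    obtain ⟨hq', rfl⟩ := isWalk_concat.1 hq
    have he := hqc e (by simp)
    simp only [critical, mem_filter] at he
    obtain ⟨-, p, hp, hpd, hep⟩ := he
    obtain ⟨p₁, p₂, rfl⟩ := List.append_of_mem hep
    obtain ⟨-, hpH, hpw⟩ := isPath_iff.1 hp
    obtain ⟨_, hp₁, rfl, hp₂⟩ := isWalk_append.1 hpw
    have hwp : IsPath P H (w ++ p₂) := by
      refine isPath_iff.2 ⟨?_, ?_, isWalk_append.2 ⟨_, hw, hp₂⟩⟩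
      · intro h
        rw [(List.append_eq_nil_iff.1 h).1, isWalk_nil] at hw
        exact P.s_no_in e hw.symm
      · simp only [List.mem_append]
        rintro f (hf | hf)
        exacts [hwH f hf, hpH f (by simp [hf])]
    have h₁ := ih hq' (fun f hf => hqc f (by simp [hf])) hp₁
      (fun f hf => hpH f (by simp [hf]))
    have h₂ := pathLen_le_duration hwp
    simp only [pathLen, List.map_append, List.sum_append, List.map_cons, List.sum_cons,
      List.map_nil, List.sum_nil] at hpd h₁ h₂ ⊢
    linarith

lemma duration_le_pathLen_of_critical {H : State P} {q : List P.E}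
    (hq : IsWalk P P.s P.t q) (hne : q ≠ []) (hqc : ∀ e ∈ q, e ∈ (critical P H).edges) :
    duration P H ≤ pathLen P H q := by
  obtain ⟨e, he⟩ := List.exists_mem_of_ne_nil q hne
  obtain ⟨-, p, hp, hpd, -⟩ := mem_filter.1 (hqc e he)
  obtain ⟨-, hpH, hpw⟩ := isPath_iff.1 hp
  exact hpd ▸ hq.pathLen_le_of_critical hqc hpw hpH

lemma planContainsCut_or_exists_walk (G : State P) (Y : P.E → ℕ) :
    PlanContainsCut P G Y ∨
      ∃ q, IsWalk P P.s P.t q ∧ ∀ e ∈ q, e ∈ G.edges ∧ Y e = 0 := by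
  let S := univ.filter fun v => ∃ q, IsWalk P P.s v q ∧ ∀ e ∈ q, e ∈ G.edges ∧ Y e = 0
  by_cases ht : P.t ∈ S
  · exact Or.inr (mem_filter.1 ht).2
  refine Or.inl ⟨_, ⟨S, mem_filter.2 ⟨mem_univ _, [], rfl, by simp⟩, ht, rfl⟩, ?_⟩
  intro e he
  obtain ⟨heG, hsrc, hdst⟩ := mem_filter.1 he
  obtain ⟨q, hq, hqY⟩ := (mem_filter.1 hsrc).2
  by_contra hYe
  refine hdst (mem_filter.2 ⟨mem_univ _, q ++ [e], isWalk_concat.2 ⟨hq, rfl⟩, ?_⟩)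
  simp only [List.mem_append, List.mem_singleton]
  rintro f (hf | rfl)
  exacts [hqY f hf, ⟨heG, by omega⟩]

end Project

/-- a `k`-crashing plan `X` (`k ≥ 1`) contains a cut of the critical
graph `N*`. -/
theorem kCrashing_contains_cut (P : Project) (k : ℤ) (hk : 1 ≤ k)
    (X : P.E → ℕ) (hX : Project.Crashing P k X) :
    Project.PlanContainsCut P (Project.critical P (Project.base P)) X := by
  open Project in
  refine (planContainsCut_or_exists_walk _ X).resolve_right ?_
  rintro ⟨q, hq, hqX⟩
  have hst : P.s ≠ P.t := by
    intro h
    have hdur := hX.2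
    rw [duration_eq_zero_of_source_eq_sink h, duration_eq_zero_of_source_eq_sink h] at hdur
    omega
  have hne : q ≠ [] := by
    rintro rfl
    exact hst hq
  have hlongest := duration_le_pathLen_of_critical hq hne fun e he => (hqX e he).1
  have hunchanged : pathLen P (applyPlan P X) q = pathLen P (base P) q := by
    refine congrArg List.sum (List.map_congr_left fun e he => ?_)
    simp [applyPlan, base, (hqX e he).2]
  have hshort := pathLen_le_duration (H := applyPlan P X)
    (isPath_iff.2 ⟨hne, fun e _ => mem_univ e, hq⟩)
  linarith [hX.2]
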